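/- Assume the interval J = (a,b) is of positive type and T is continuously differentiable on (a,b); for k ∈ {1,…,n} let λ_k ∈ (a,b) be the k-th eigenvalue of T(·) given by the variational principle (λ_k is the minimum over all k-dimensional ℂ-subspaces S ⊆ ℂ^n of the maximum of ρ(x) over nonzero x ∈ S). Then there exist nonzero vectors v_1,…,v_n ∈ ℂ^n with T(λ_k)v_k = 0 for each k, such that v_1,…,v_n form a basis of ℂ^n and such that they are pairwise orthogonal with respect to the generalized scalar product: for all j ≠ k, if λ_j ≠ λ_k then v_k*(T(λ_k) − T(λ_j))v_j = 0, while if λ_j = λ_k then v_k* T'(λ_k) v_j = 0. -/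

import Mathlib

/-!
Fix an eigenvalue `t = λ_k`, and let `k₁ ≤ k₂` be the first and last indices with `λ = t`.
The min-max characterisation, compared with the eigenvectors of the Hermitian matrix `T(t)`,
shows that `T(t)` has at most `k₁` positive and at most `n - k₂ - 1` negative eigenvalues, so
`dim ker T(t)` is at least the multiplicity of `t`. Diagonalising the Hermitian form of `T'(t)`
on `ker T(t)` then gives enough `T'(t)`-orthogonal eigenvectors for `t`.

Eigenvectors for different eigenvalues are independent: in positive type, adding a vector of
`ker T(μ)` to some `x` with `ρ x < μ` keeps `ρ` below `μ`, so a nonzero sum of eigenvectors for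
eigenvalues below `μ` is never an eigenvector for `μ`. The orthogonality relation for distinct
eigenvalues is automatic, since `T(λ_j) v_j = 0` and `v_k* T(λ_k) = 0`.
-/

open Matrix Set Module Filter Topology
open scoped Finset

theorem exists_isGreatest_image_of_smul_invariant {E : Type*} [NormedAddCommGroup E]
    [NormedSpace ℂ E] [FiniteDimensional ℂ E] {f : E → ℝ} (hf : ContinuousOn f {x | x ≠ 0})
    (hsmul : ∀ c : ℂ, c ≠ 0 → ∀ x, f (c • x) = f x) {S : Submodule ℂ E} (hS : S ≠ ⊥) :
    ∃ r, IsGreatest (f '' {x | x ∈ S ∧ x ≠ 0}) r := by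
  have hne : (f '' {x | x ∈ S ∧ x ≠ 0}).Nonempty := by
    obtain ⟨x, hxS, hx0⟩ := Submodule.exists_mem_ne_zero_of_ne_bot hS
    exact ⟨f x, x, ⟨hxS, hx0⟩, rfl⟩
  have himage : f '' {x | x ∈ S ∧ x ≠ 0} = f '' (S ∩ Metric.sphere 0 1) := by
    refine Subset.antisymm ?_ (image_mono fun x hx => ⟨hx.1, ne_zero_of_mem_unit_sphere ⟨x, hx.2⟩⟩)
    rintro _ ⟨x, ⟨hxS, hx0⟩, rfl⟩
    have hnorm : (‖x‖ : ℂ) ≠ 0 := by exact_mod_cast norm_ne_zero_iff.mpr hx0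
    refine ⟨(‖x‖ : ℂ)⁻¹ • x, ⟨S.smul_mem _ hxS, ?_⟩, hsmul _ (inv_ne_zero hnorm) x⟩
    simp [norm_smul, hx0]
  rw [himage] at hne ⊢
  have hK : IsCompact (S ∩ Metric.sphere (0 : E) 1) :=
    (isCompact_sphere 0 1).inter_left S.closed_of_finiteDimensional
  exact (hK.image_of_continuousOn (hf.mono fun x hx => ne_zero_of_mem_unit_sphere ⟨x, hx.2⟩))
    |>.exists_isGreatest hne

theorem Matrix.isHermitian_of_hasDerivAt {m : Type*} {f : ℝ → Matrix m m ℂ} {f' : Matrix m m ℂ}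
    {μ : ℝ} (hf : ∀ᶠ t in 𝓝 μ, (f t).IsHermitian)
    (hderiv : ∀ i j, HasDerivAt (fun t => f t i j) (f' i j) μ) : f'.IsHermitian := by
  refine IsHermitian.ext fun i j => ((hderiv i j).unique ?_).symm
  exact (hderiv j i).star.congr_of_eventuallyEq (hf.mono fun t ht => (ht.apply i j).symm)

variable {m : Type*} [Fintype m]

namespace Matrix

theorem conjTranspose_mul_mul_apply {ι κ : Type*} (X : Matrix m ι ℂ) (B : Matrix m m ℂ)
    (Y : Matrix m κ ℂ) (i : ι) (j : κ) :
    (Xᴴ * B * Y) i j = star (X.col i) ⬝ᵥ B *ᵥ Y.col j := by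
  rw [Matrix.mul_assoc]
  simp only [mul_apply, conjTranspose_apply, dotProduct, mulVec, col_apply, Pi.star_apply,
    Finset.mul_sum]

theorem IsHermitian.star_dotProduct_mulVec_comm {A : Matrix m m ℂ} (hA : A.IsHermitian)
    (x y : m → ℂ) : star x ⬝ᵥ A *ᵥ y = star (star y ⬝ᵥ A *ᵥ x) := by
  rw [star_dotProduct, star_mulVec, ← dotProduct_mulVec, hA.eq]

theorem IsHermitian.star_dotProduct_mulVec_eq_zero {A : Matrix m m ℂ} (hA : A.IsHermitian)
    {x : m → ℂ} (hx : A *ᵥ x = 0) (y : m → ℂ) : star x ⬝ᵥ A *ᵥ y = 0 := by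
  rw [hA.star_dotProduct_mulVec_comm, hx, dotProduct_zero, star_zero]

theorem IsHermitian.star_dotProduct_mulVec_add_of_mulVec_eq_zero {A : Matrix m m ℂ}
    (hA : A.IsHermitian) (x : m → ℂ) {w : m → ℂ} (hw : A *ᵥ w = 0) :
    star (x + w) ⬝ᵥ A *ᵥ (x + w) = star x ⬝ᵥ A *ᵥ x := by
  rw [mulVec_add, hw, add_zero, star_add, add_dotProduct, hA.star_dotProduct_mulVec_eq_zero hw,
    add_zero]

theorem exists_linearIndependent_pairwise_star_dotProduct_mulVec_eq_zero [DecidableEq m]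
    {B : Matrix m m ℂ} (hB : B.IsHermitian) (W : Submodule ℂ (m → ℂ)) {ι : Type*} [Fintype ι]
    (hι : Fintype.card ι ≤ finrank ℂ W) :
    ∃ e : ι → m → ℂ, LinearIndependent ℂ e ∧ (∀ j, e j ∈ W) ∧
      Pairwise fun j k => star (e k) ⬝ᵥ B *ᵥ e j = 0 := by
  -- Change the basis of `W` (the columns of `M`) by the unitary diagonalising the Gram matrix.
  obtain ⟨emb⟩ := Function.Embedding.nonempty_of_card_le (hι.trans_eq (Fintype.card_fin _).symm)
  let b := Module.finBasis ℂ W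
  let M : Matrix m (Fin (finrank ℂ W)) ℂ := Matrix.of fun r j => (b j : m → ℂ) r
  have hG : (Mᴴ * B * M).IsHermitian := isHermitian_conjTranspose_mul_mul M hB
  let U : Matrix (Fin (finrank ℂ W)) (Fin (finrank ℂ W)) ℂ := hG.eigenvectorUnitary
  refine ⟨(M * U).col ∘ emb, ?_, fun j => ?_, fun j k hjk => ?_⟩
  · refine LinearIndependent.comp ?_ emb emb.injective
    have hM : Function.Injective M.mulVec :=
      mulVec_injective_iff.mpr (b.linearIndependent.map' W.subtype W.ker_subtype)
    rw [← mulVec_injective_iff]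
    have : (M * U).mulVec = M.mulVec ∘ U.mulVec := funext fun v => (mulVec_mulVec v M U).symm
    rw [this]
    exact hM.comp (mulVec_injective_of_isUnit Unitary.isUnit_coe)
  · have hMW : LinearMap.range M.mulVecLin ≤ W := by
      rw [range_mulVecLin, Submodule.span_le]
      rintro _ ⟨i, rfl⟩
      exact (b i).2
    rw [Function.comp_apply, ← mulVec_single_one, ← mulVec_mulVec]
    exact hMW ⟨_, rfl⟩
  · have hdiag : star U * (Mᴴ * B * M) * U = diagonal (RCLike.ofReal ∘ hG.eigenvalues) := by
      simpa using hG.conjStarAlgAut_star_eigenvectorUnitary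
    have hconj : (M * U)ᴴ * B * (M * U) = star U * (Mᴴ * B * M) * U := by
      simp only [conjTranspose_mul, star_eq_conjTranspose, Matrix.mul_assoc]
    change star ((M * U).col (emb k)) ⬝ᵥ B *ᵥ (M * U).col (emb j) = 0
    rw [← conjTranspose_mul_mul_apply, hconj, hdiag,
      diagonal_apply_ne _ (emb.injective.ne (Ne.symm hjk))]

theorem re_star_dotProduct_mulVec_pos_of_mem_span {ι : Type*} [Fintype ι] [DecidableEq ι]
    {A : Matrix m m ℂ} {u : ι → m → ℂ} {μ : ι → ℝ}
    (horth : ∀ i j, star (u i) ⬝ᵥ u j = if i = j then 1 else 0)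
    (heig : ∀ i, A *ᵥ u i = (μ i : ℂ) • u i) (hμ : ∀ i, 0 < μ i)
    {x : m → ℂ} (hx : x ∈ Submodule.span ℂ (range u)) (hx0 : x ≠ 0) :
    0 < (star x ⬝ᵥ A *ᵥ x).re := by
  obtain ⟨c, rfl⟩ := Submodule.mem_span_range_iff_exists_fun ℂ |>.mp hx
  have hform : star (∑ i, c i • u i) ⬝ᵥ A *ᵥ ∑ i, c i • u i
      = ∑ i, ((Complex.normSq (c i) * μ i : ℝ) : ℂ) := by
    simp only [mulVec_sum, mulVec_smul, heig, star_sum, star_smul, sum_dotProduct, dotProduct_sum,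
      smul_dotProduct, dotProduct_smul, horth, smul_eq_mul, mul_ite, mul_one, mul_zero,
      Finset.sum_ite_eq', Finset.mem_univ, if_true]
    refine Finset.sum_congr rfl fun i _ => ?_
    rw [Complex.ofReal_mul, Complex.normSq_eq_conj_mul_self]
    simp only [RCLike.star_def]
    ring
  obtain ⟨i, hi⟩ : ∃ i, c i ≠ 0 := by
    by_contra! hc
    exact hx0 (by simp [hc])
  rw [hform, ← Complex.ofReal_sum, Complex.ofReal_re]
  exact Finset.sum_pos' (fun j _ => mul_nonneg (Complex.normSq_nonneg _) (hμ j).le)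
    ⟨i, Finset.mem_univ _, mul_pos (Complex.normSq_pos.mpr hi) (hμ i)⟩

namespace IsHermitian

variable [DecidableEq m] {A : Matrix m m ℂ} (hA : A.IsHermitian)

theorem star_eigenvectorBasis_dotProduct (i j : m) :
    star ⇑(hA.eigenvectorBasis i) ⬝ᵥ ⇑(hA.eigenvectorBasis j) = if i = j then 1 else 0 := by
  rw [dotProduct_comm, ← EuclideanSpace.inner_eq_star_dotProduct]
  exact orthonormal_iff_ite.mp hA.eigenvectorBasis.orthonormal i j

theorem linearIndependent_eigenvectorBasis :
    LinearIndependent ℂ fun i => ⇑(hA.eigenvectorBasis i) := by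
  have h := linearIndependent_cols_of_isUnit (Unitary.isUnit_coe (U := hA.eigenvectorUnitary))
  rwa [show (hA.eigenvectorUnitary : Matrix m m ℂ).col = fun i => ⇑(hA.eigenvectorBasis i) from
    funext hA.eigenvectorUnitary_col_eq] at h

noncomputable def eigenvectorSpan (s : Finset m) : Submodule ℂ (m → ℂ) :=
  Submodule.span ℂ (range fun i : s => ⇑(hA.eigenvectorBasis i))

theorem finrank_eigenvectorSpan (s : Finset m) : finrank ℂ (hA.eigenvectorSpan s) = #s :=
  (finrank_span_eq_card (hA.linearIndependent_eigenvectorBasis.comp _ Subtype.val_injective)).trans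
    (Fintype.card_coe s)

theorem re_pos_of_mem_eigenvectorSpan {s : Finset m} (hs : ∀ i ∈ s, 0 < hA.eigenvalues i)
    {x : m → ℂ} (hx : x ∈ hA.eigenvectorSpan s) (hx0 : x ≠ 0) : 0 < (star x ⬝ᵥ A *ᵥ x).re :=
  re_star_dotProduct_mulVec_pos_of_mem_span (u := fun i : s => ⇑(hA.eigenvectorBasis i))
    (μ := fun i : s => hA.eigenvalues i)
    (fun i j => by simp only [star_eigenvectorBasis_dotProduct, Subtype.ext_iff])
    (fun i => by rw [hA.mulVec_eigenvectorBasis, Complex.coe_smul]) (fun i => hs i i.2) hx hx0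

theorem re_neg_of_mem_eigenvectorSpan {s : Finset m} (hs : ∀ i ∈ s, hA.eigenvalues i < 0)
    {x : m → ℂ} (hx : x ∈ hA.eigenvectorSpan s) (hx0 : x ≠ 0) : (star x ⬝ᵥ A *ᵥ x).re < 0 := by
  have := re_star_dotProduct_mulVec_pos_of_mem_span (A := -A)
    (u := fun i : s => ⇑(hA.eigenvectorBasis i)) (μ := fun i : s => -hA.eigenvalues i)
    (fun i j => by simp only [star_eigenvectorBasis_dotProduct, Subtype.ext_iff])
    (fun i => by rw [neg_mulVec, hA.mulVec_eigenvectorBasis, Complex.ofReal_neg, neg_smul,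
      Complex.coe_smul]) (fun i => neg_pos.mpr (hs i i.2)) hx hx0
  simpa [neg_mulVec] using this

theorem card_le_card_add_card_add_finrank_ker :
    Fintype.card m ≤ #{i | hA.eigenvalues i < 0} + #{i | 0 < hA.eigenvalues i} +
      finrank ℂ (LinearMap.ker A.mulVecLin) := by
  have hrank := LinearMap.finrank_range_add_finrank_ker A.mulVecLin
  rw [finrank_fintype_fun_eq_card, ← Matrix.rank, hA.rank_eq_card_non_zero_eigs,
    Fintype.card_subtype] at hrank
  have hne : #{i | hA.eigenvalues i ≠ 0} ≤
      #{i | hA.eigenvalues i < 0} + #{i | 0 < hA.eigenvalues i} :=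
    (Finset.card_le_card fun i hi => by
      simp only [Finset.mem_filter, Finset.mem_union, Finset.mem_univ, true_and] at hi ⊢
      exact hi.lt_or_gt).trans (Finset.card_union_le _ _)
  omega

end IsHermitian
end Matrix

-- `λ_{k+1}` of the variational principle is the least element of `subspaceMaxima ρ k`.
def subspaceMaxima (ρ : (m → ℂ) → ℝ) (k : ℕ) : Set ℝ :=
  {r | ∃ S : Submodule ℂ (m → ℂ), finrank ℂ S = k + 1 ∧ IsGreatest (ρ '' {x | x ∈ S ∧ x ≠ 0}) r}

structure IsPositiveTypeRayleighFunctional (T : ℝ → Matrix m m ℂ) (ρ : (m → ℂ) → ℝ) (a b : ℝ) :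
    Prop where
  isHermitian : ∀ μ ∈ Ioo a b, (T μ).IsHermitian
  mem_Ioo : ∀ x, x ≠ 0 → ρ x ∈ Ioo a b
  root : ∀ x, x ≠ 0 → star x ⬝ᵥ T (ρ x) *ᵥ x = 0
  pos : ∀ x, x ≠ 0 → ∀ μ ∈ Ioo a b, μ ≠ ρ x → 0 < (μ - ρ x) * (star x ⬝ᵥ T μ *ᵥ x).re

namespace IsPositiveTypeRayleighFunctional

variable {T : ℝ → Matrix m m ℂ} {ρ : (m → ℂ) → ℝ} {a b μ : ℝ} {x : m → ℂ}

theorem rho_eq_of_mulVec_eq_zero (h : IsPositiveTypeRayleighFunctional T ρ a b) (hx : x ≠ 0)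
    (hμ : μ ∈ Ioo a b) (hTx : T μ *ᵥ x = 0) : ρ x = μ := by
  by_contra hne
  have := h.pos x hx μ hμ (Ne.symm hne)
  simp [hTx] at this

theorem rho_smul (h : IsPositiveTypeRayleighFunctional T ρ a b) {c : ℂ} (hc : c ≠ 0)
    (x : m → ℂ) : ρ (c • x) = ρ x := by
  rcases eq_or_ne x 0 with rfl | hx
  · rw [smul_zero]
  by_contra hne
  have := h.pos (c • x) (smul_ne_zero hc hx) (ρ x) (h.mem_Ioo x hx) (Ne.symm hne)
  simp [mulVec_smul, star_smul, h.root x hx] at this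

theorem re_pos_iff (h : IsPositiveTypeRayleighFunctional T ρ a b) (hx : x ≠ 0)
    (hμ : μ ∈ Ioo a b) : 0 < (star x ⬝ᵥ T μ *ᵥ x).re ↔ ρ x < μ := by
  rcases lt_trichotomy (ρ x) μ with hlt | rfl | hgt
  · exact iff_of_true (pos_of_mul_pos_right (h.pos x hx μ hμ hlt.ne') (sub_nonneg.mpr hlt.le)) hlt
  · simp [h.root x hx]
  · exact iff_of_false
      (not_lt.mpr (neg_of_mul_pos_right (h.pos x hx μ hμ hgt.ne) (sub_nonpos.mpr hgt.le)).le)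
      (not_lt.mpr hgt.le)

theorem re_neg_iff (h : IsPositiveTypeRayleighFunctional T ρ a b) (hx : x ≠ 0)
    (hμ : μ ∈ Ioo a b) : (star x ⬝ᵥ T μ *ᵥ x).re < 0 ↔ μ < ρ x := by
  rcases lt_trichotomy (ρ x) μ with hlt | rfl | hgt
  · exact iff_of_false
      (not_lt.mpr (pos_of_mul_pos_right (h.pos x hx μ hμ hlt.ne') (sub_nonneg.mpr hlt.le)).le)
      (not_lt.mpr hlt.le)
  · simp [h.root x hx]
  · exact iff_of_true (neg_of_mul_pos_right (h.pos x hx μ hμ hgt.ne) (sub_nonpos.mpr hgt.le)) hgt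

theorem rho_add_lt (h : IsPositiveTypeRayleighFunctional T ρ a b) {w : m → ℂ} (hx : x ≠ 0)
    (hxw : x + w ≠ 0)
    (hμ : μ ∈ Ioo a b) (hw : T μ *ᵥ w = 0) (hρ : ρ x < μ) : ρ (x + w) < μ := by
  rwa [← h.re_pos_iff hxw hμ,
    (h.isHermitian μ hμ).star_dotProduct_mulVec_add_of_mulVec_eq_zero x hw, h.re_pos_iff hx hμ]

theorem rho_sum_lt (h : IsPositiveTypeRayleighFunctional T ρ a b) {w : ℝ → m → ℂ} (F : Finset ℝ)
    (hF : ∀ t ∈ F, t ∈ Ioo a b ∧ T t *ᵥ w t = 0) (hμ : μ ∈ Ioo a b) (hFμ : ∀ t ∈ F, t < μ)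
    (hsum : ∑ t ∈ F, w t ≠ 0) : ρ (∑ t ∈ F, w t) < μ := by
  induction F using Finset.induction_on_max generalizing μ with
  | empty => simp at hsum
  | insert tm F hlt ih =>
    have htm := hF tm (Finset.mem_insert_self tm F)
    have hF' t (ht : t ∈ F) := hF t (Finset.mem_insert_of_mem ht)
    rw [Finset.sum_insert fun h => (hlt tm h).false, add_comm] at hsum ⊢
    refine lt_of_le_of_lt ?_ (hFμ tm (Finset.mem_insert_self tm F))
    by_cases hrest : ∑ t ∈ F, w t = 0
    · rw [hrest, zero_add] at hsum ⊢
      exact (h.rho_eq_of_mulVec_eq_zero hsum htm.1 htm.2).le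
    · exact (h.rho_add_lt hrest hsum htm.1 htm.2 (ih hF' htm.1 hlt hrest)).le


theorem eq_zero_of_sum_eq_zero (h : IsPositiveTypeRayleighFunctional T ρ a b) {w : ℝ → m → ℂ}
    (F : Finset ℝ) (hF : ∀ t ∈ F, t ∈ Ioo a b ∧ T t *ᵥ w t = 0) (hsum : ∑ t ∈ F, w t = 0) :
    ∀ t ∈ F, w t = 0 := by
  induction F using Finset.induction_on_max with
  | empty => simp
  | insert tm F hlt ih =>
    have htm := hF tm (Finset.mem_insert_self tm F)
    have hF' t (ht : t ∈ F) := hF t (Finset.mem_insert_of_mem ht)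
    rw [Finset.sum_insert fun h => (hlt tm h).false] at hsum
    have hrest : ∑ t ∈ F, w t = 0 := by
      by_contra hne
      have hwtm : w tm ≠ 0 := fun h0 => hne (by rwa [h0, zero_add] at hsum)
      have := h.rho_sum_lt F hF' htm.1 hlt hne
      rw [eq_neg_of_add_eq_zero_right hsum, ← neg_one_smul ℂ, h.rho_smul (by norm_num),
        h.rho_eq_of_mulVec_eq_zero hwtm htm.1 htm.2] at this
      exact this.false
    rw [hrest, add_zero] at hsum
    intro t ht
    rcases Finset.mem_insert.mp ht with rfl | ht
    exacts [hsum, ih hF' hrest t ht]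

theorem linearIndependent_of_linearIndependent_fiber
    (h : IsPositiveTypeRayleighFunctional T ρ a b) {ι : Type*} [Fintype ι] {lam : ι → ℝ}
    {v : ι → m → ℂ} (hlam : ∀ i, lam i ∈ Ioo a b) (hv : ∀ i, T (lam i) *ᵥ v i = 0)
    (hfiber : ∀ t, LinearIndependent ℂ fun i : {i // lam i = t} => v i) :
    LinearIndependent ℂ v := by
  classical
  refine Fintype.linearIndependent_iff.mpr fun c hc i => ?_
  let w t := ∑ j with lam j = t, c j • v j
  have hw : ∀ t ∈ Finset.univ.image lam, t ∈ Ioo a b ∧ T t *ᵥ w t = 0 := by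
    intro t ht
    obtain ⟨j, -, rfl⟩ := Finset.mem_image.mp ht
    refine ⟨hlam j, (mulVec_sum _ _ _).trans (Finset.sum_eq_zero fun k hk => ?_)⟩
    rw [mulVec_smul, ← (Finset.mem_filter.mp hk).2, hv, smul_zero]
  have hsum : ∑ t ∈ Finset.univ.image lam, w t = 0 := by
    rw [Finset.sum_fiberwise_of_maps_to fun j _ => Finset.mem_image_of_mem lam (Finset.mem_univ j)]
    exact hc
  have hwi :=
    h.eq_zero_of_sum_eq_zero _ hw hsum (lam i) (Finset.mem_image_of_mem lam (Finset.mem_univ i))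
  rw [show w (lam i) = _ from Finset.sum_subtype _ (p := (lam · = lam i)) (by simp) _] at hwi
  exact Fintype.linearIndependent_iff.mp (hfiber (lam i)) (fun j => c j) hwi ⟨i, rfl⟩


theorem mem_Ioo_of_isLeast (h : IsPositiveTypeRayleighFunctional T ρ a b) {k : ℕ} {l : ℝ}
    (hl : IsLeast (subspaceMaxima ρ k) l) : l ∈ Ioo a b := by
  obtain ⟨S, -, ⟨x, ⟨-, hx0⟩, rfl⟩, -⟩ := hl.1
  exact h.mem_Ioo x hx0

variable [DecidableEq m]

theorem card_pos_eigenvalues_le (h : IsPositiveTypeRayleighFunctional T ρ a b)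
    (hρ : ContinuousOn ρ {x | x ≠ 0}) {t : ℝ} (ht : t ∈ Ioo a b) {k : ℕ} {l : ℝ}
    (hl : IsLeast (subspaceMaxima ρ k) l) (htl : t ≤ l) :
    #{i | 0 < (h.isHermitian t ht).eigenvalues i} ≤ k := by
  set hA := h.isHermitian t ht
  by_contra! hk
  obtain ⟨s, hs, hcard⟩ := Finset.exists_subset_card_eq hk
  have hS : finrank ℂ (hA.eigenvectorSpan s) = k + 1 := (hA.finrank_eigenvectorSpan s).trans hcard
  obtain ⟨r, hr⟩ := exists_isGreatest_image_of_smul_invariant hρ (fun c hc => h.rho_smul hc)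
    (S := hA.eigenvectorSpan s) fun hbot => by rw [hbot, finrank_bot] at hS; omega
  obtain ⟨x, ⟨hxS, hx0⟩, rfl⟩ := hr.1
  have hxt : ρ x < t := (h.re_pos_iff hx0 ht).mp
    (hA.re_pos_of_mem_eigenvectorSpan (fun i hi => (Finset.mem_filter.mp (hs hi)).2) hxS hx0)
  have hlx : l ≤ ρ x := hl.2 ⟨_, hS, hr⟩
  linarith

theorem card_neg_eigenvalues_add_le (h : IsPositiveTypeRayleighFunctional T ρ a b) {t : ℝ}
    (ht : t ∈ Ioo a b) {k : ℕ} {l : ℝ} (hl : IsLeast (subspaceMaxima ρ k) l) (hlt : l ≤ t) :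
    #{i | (h.isHermitian t ht).eigenvalues i < 0} + (k + 1) ≤ Fintype.card m := by
  set hA := h.isHermitian t ht
  obtain ⟨S, hS, hSmax⟩ := hl.1
  set V := hA.eigenvectorSpan {i | hA.eigenvalues i < 0}
  by_contra! hcard
  have hVS : ¬ Disjoint V S := fun hd => by
    have := Submodule.finrank_add_finrank_le_of_disjoint hd
    rw [hA.finrank_eigenvectorSpan, hS, finrank_fintype_fun_eq_card] at this
    omega
  obtain ⟨x, hxV, hxS, hx0⟩ : ∃ x ∈ V, x ∈ S ∧ x ≠ 0 := by
    simpa [Submodule.disjoint_def] using hVS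
  have htx : t < ρ x := (h.re_neg_iff hx0 ht).mp
    (hA.re_neg_of_mem_eigenvectorSpan (fun i hi => (Finset.mem_filter.mp hi).2) hxV hx0)
  have hxl : ρ x ≤ l := hSmax.2 ⟨x, ⟨hxS, hx0⟩, rfl⟩
  linarith

end IsPositiveTypeRayleighFunctional

theorem IsPositiveTypeRayleighFunctional.card_fiber_le_finrank_ker {n : ℕ} {a b : ℝ}
    {T : ℝ → Matrix (Fin n) (Fin n) ℂ} {ρ : (Fin n → ℂ) → ℝ}
    (h : IsPositiveTypeRayleighFunctional T ρ a b) (hρ : ContinuousOn ρ {x | x ≠ 0})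
    {lam : Fin n → ℝ}
    (hlam : ∀ k : Fin n, IsLeast (subspaceMaxima ρ k) (lam k)) (t : ℝ) :
    Fintype.card {k // lam k = t} ≤ finrank ℂ (LinearMap.ker (T t).mulVecLin) := by
  rcases isEmpty_or_nonempty {k // lam k = t} with _ | ⟨⟨k₀, rfl⟩⟩
  · simp
  have ht := h.mem_Ioo_of_isLeast (hlam k₀)
  rw [Fintype.card_subtype]
  set F : Finset (Fin n) := {k | lam k = lam k₀}
  have hF : F.Nonempty := ⟨k₀, by simp [F]⟩
  set k₁ := F.min' hF
  set k₂ := F.max' hF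
  have hpos :=
    h.card_pos_eigenvalues_le hρ ht (hlam k₁) (Finset.mem_filter.mp (F.min'_mem hF)).2.ge
  have hneg :=
    h.card_neg_eigenvalues_add_le ht (hlam k₂) (Finset.mem_filter.mp (F.max'_mem hF)).2.le
  have hker := (h.isHermitian _ ht).card_le_card_add_card_add_finrank_ker
  have hF_le : #F ≤ (k₂ : ℕ) + 1 - k₁ :=
    (Finset.card_le_card fun k hk => Finset.mem_Icc.mpr ⟨F.min'_le k hk, F.le_max' k hk⟩).trans
      (Fin.card_Icc k₁ k₂).le
  rw [Fintype.card_fin] at hker hneg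
  omega

theorem eigenvector_basis_orthogonality_positive_type_general
    (n : ℕ) (a b : ℝ)
    (T T' : ℝ → Matrix (Fin n) (Fin n) ℂ)
    (hTherm : ∀ μ ∈ Set.Icc a b, (T μ).IsHermitian)
    (hT'deriv : ∀ μ ∈ Set.Ioo a b, ∀ i j : Fin n,
      HasDerivAt (fun t : ℝ => T t i j) (T' μ i j) μ)
    (ρ : (Fin n → ℂ) → ℝ)
    (hρcont : ContinuousOn ρ {x : Fin n → ℂ | x ≠ 0})
    (hρmem : ∀ x : Fin n → ℂ, x ≠ 0 → ρ x ∈ Set.Ioo a b)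
    (hρroot : ∀ x : Fin n → ℂ, x ≠ 0 → star x ⬝ᵥ (T (ρ x)) *ᵥ x = 0)
    (hpos : ∀ x : Fin n → ℂ, x ≠ 0 → ∀ μ ∈ Set.Ioo a b, μ ≠ ρ x →
      0 < (μ - ρ x) * (star x ⬝ᵥ (T μ) *ᵥ x).re)
    (lam : Fin n → ℝ)
    (hlam : ∀ k : Fin n,
      IsLeast {r : ℝ | ∃ S : Submodule ℂ (Fin n → ℂ), Module.finrank ℂ S = (k : ℕ) + 1 ∧
        IsGreatest (ρ '' {x : Fin n → ℂ | x ∈ S ∧ x ≠ 0}) r} (lam k)) :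
    ∃ v : Fin n → (Fin n → ℂ),
      (∀ k : Fin n, v k ≠ 0 ∧ (T (lam k)) *ᵥ (v k) = 0) ∧
      LinearIndependent ℂ v ∧ Submodule.span ℂ (Set.range v) = ⊤ ∧
      (∀ j k : Fin n, j ≠ k →
        (lam j ≠ lam k → star (v k) ⬝ᵥ (T (lam k) - T (lam j)) *ᵥ (v j) = 0) ∧
        (lam j = lam k → star (v k) ⬝ᵥ (T' (lam k)) *ᵥ (v j) = 0)) := by
  have h : IsPositiveTypeRayleighFunctional T ρ a b :=
    ⟨fun μ hμ => hTherm μ (Ioo_subset_Icc_self hμ), hρmem, hρroot, hpos⟩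
  have hlam_mem k : lam k ∈ Ioo a b := h.mem_Ioo_of_isLeast (hlam k)
  have hfiber t : ∃ f : {k // lam k = t} → Fin n → ℂ, LinearIndependent ℂ f ∧
      (∀ k, T t *ᵥ f k = 0) ∧ Pairwise fun j k => star (f k) ⬝ᵥ T' t *ᵥ f j = 0 := by
    rcases isEmpty_or_nonempty {k // lam k = t} with _ | ⟨⟨k, rfl⟩⟩
    · exact ⟨isEmptyElim, linearIndependent_empty_type, isEmptyElim, fun j => isEmptyElim j⟩
    have hT' : (T' (lam k)).IsHermitian := isHermitian_of_hasDerivAt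
      (eventually_of_mem (isOpen_Ioo.mem_nhds (hlam_mem k)) h.isHermitian)
      (hT'deriv _ (hlam_mem k))
    exact exists_linearIndependent_pairwise_star_dotProduct_mulVec_eq_zero hT' _
      (h.card_fiber_le_finrank_ker hρcont hlam _)
  choose f hf_indep hf_ker hf_orth using hfiber
  set v : Fin n → Fin n → ℂ := fun k => f (lam k) ⟨k, rfl⟩
  have hv t k (hk : lam k = t) : v k = f t ⟨k, hk⟩ := by subst hk; rfl
  have hv_ker k : T (lam k) *ᵥ v k = 0 := hf_ker _ _
  have hv_indep : LinearIndependent ℂ v := h.linearIndependent_of_linearIndependent_fiber hlam_mem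
    hv_ker fun t => by
      rw [show (fun k : {k // lam k = t} => v k) = f t from funext fun k => hv t k k.2]
      exact hf_indep t
  refine ⟨v, fun k => ⟨hv_indep.ne_zero k, hv_ker k⟩, hv_indep,
    hv_indep.span_eq_top_of_card_eq_finrank' (by simp),
    fun j k hjk => ⟨fun _ => ?_, fun hjk' => ?_⟩⟩
  · rw [sub_mulVec, dotProduct_sub, hv_ker j, dotProduct_zero, sub_zero,
      (h.isHermitian _ (hlam_mem k)).star_dotProduct_mulVec_eq_zero (hv_ker k)]
  · rw [hv _ j hjk', hv _ k rfl]
    exact hf_orth _ fun heq => hjk (congrArg Subtype.val heq)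

/-- on an interval `(a,b)` of positive type (with `T` continuously
differentiable there, derivative `T'`), letting `lam k ∈ (a,b)` be the `k`-th
eigenvalue given by the variational principle (the minimum over `(k+1)`-dimensional
subspaces of the maximum of `ρ`, zero-based `k`), there exist corresponding
eigenvectors `v 0, …, v (n-1)` forming a basis of `ℂⁿ` that are pairwise orthogonal
with respect to the generalized scalar product. -/
theorem eigenvector_basis_orthogonality_positive_type
    (n : ℕ) (hn : 1 ≤ n) (a b : ℝ) (hab : a < b)
    (T T' : ℝ → Matrix (Fin n) (Fin n) ℂ)
    (hTcont : ContinuousOn T (Set.Icc a b))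
    (hTherm : ∀ μ ∈ Set.Icc a b, (T μ).IsHermitian)
    (hT'deriv : ∀ μ ∈ Set.Ioo a b, ∀ i j : Fin n,
      HasDerivAt (fun t : ℝ => T t i j) (T' μ i j) μ)
    (hT'cont : ContinuousOn T' (Set.Ioo a b))
    (ρ : (Fin n → ℂ) → ℝ)
    (hρcont : ContinuousOn ρ {x : Fin n → ℂ | x ≠ 0})
    (hρmem : ∀ x : Fin n → ℂ, x ≠ 0 → ρ x ∈ Set.Ioo a b)
    (hρroot : ∀ x : Fin n → ℂ, x ≠ 0 → star x ⬝ᵥ (T (ρ x)) *ᵥ x = 0)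
    (hρuniq : ∀ x : Fin n → ℂ, x ≠ 0 → ∀ μ ∈ Set.Ioo a b,
      star x ⬝ᵥ (T μ) *ᵥ x = 0 → μ = ρ x)
    (hpos : ∀ x : Fin n → ℂ, x ≠ 0 → ∀ μ ∈ Set.Ioo a b, μ ≠ ρ x →
      0 < (μ - ρ x) * (star x ⬝ᵥ (T μ) *ᵥ x).re)
    (lam : Fin n → ℝ)
    (hlam_mem : ∀ k : Fin n, lam k ∈ Set.Ioo a b)
    (hlam : ∀ k : Fin n,
      IsLeast {r : ℝ | ∃ S : Submodule ℂ (Fin n → ℂ), Module.finrank ℂ S = (k : ℕ) + 1 ∧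
        IsGreatest (ρ '' {x : Fin n → ℂ | x ∈ S ∧ x ≠ 0}) r} (lam k)) :
    ∃ v : Fin n → (Fin n → ℂ),
      (∀ k : Fin n, v k ≠ 0 ∧ (T (lam k)) *ᵥ (v k) = 0) ∧
      LinearIndependent ℂ v ∧ Submodule.span ℂ (Set.range v) = ⊤ ∧
      (∀ j k : Fin n, j ≠ k →
        (lam j ≠ lam k → star (v k) ⬝ᵥ (T (lam k) - T (lam j)) *ᵥ (v j) = 0) ∧
        (lam j = lam k → star (v k) ⬝ᵥ (T' (lam k)) *ᵥ (v j) = 0)) :=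
  eigenvector_basis_orthogonality_positive_type_general n a b T T' hTherm hT'deriv ρ hρcont hρmem
    hρroot hpos lam hlam
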